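/- Let a_1, a_2, a_3, b be real numbers with 0 ≤ a_1 ≤ a_2 ≤ a_3 < 1 and b ≥ 0. If a_2 − a_1 ≥ 0.7452, then D(a_1, a_2, a_3, b) < 0. -/
import Mathlib

/-- The Donaldson–Futaki polynomial for polarizations of `ℙ¹ × ℙ¹`-type on a smooth
del Pezzo surface of degree `5`, with `μ = 2 + b + a₁ + a₂`. -/
noncomputable def Dp1p1deg5 (a1 a2 a3 b : ℝ) : ℝ :=
  (5 + 2 * b + a1 + a2 + a3) *
      (-(2 + b + a1 + a2) ^ 3 - 3 * (1 - a1) * (2 + b + a1 + a2) ^ 2 +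
        (1 + b + a2) ^ 3 + (1 + a2) ^ 3 + (1 - a3) ^ 3) +
    3 * ((2 + b + a1 + a2) ^ 2 + (1 - a1) * (2 + b + a1 + a2)) *
      (5 + 4 * b + 2 * (a1 + a2 + a3) - a1 ^ 2 - a2 ^ 2 - a3 ^ 2)

set_option maxHeartbeats 2000000 in
lemma Dp1p1deg5_aux (x g t b : ℝ) (hx : 0 ≤ x) (hg : 0 ≤ g) (ht : 0 ≤ t) (hb : 0 ≤ b) :
    Dp1p1deg5 x (x + g + 1863/2500) (x + g + t + 1863/2500) b < 0 := by
  have hS : (0:ℝ) ≤ (9728654191/3906250000)*b + (1037307/3125000)*b^2 + (17768791829/976562500)*t + (63779421/3125000)*t*b + (5589/1250)*t*b^2 + (40746057/1562500)*t^2 + (11214/625)*t^2*b + (3/1)*t^2*b^2 + (2863/500)*t^3 + (2/1)*t^3*b + (1/1)*t^4 + (17768791829/488281250)*g + (63779421/1562500)*g*b + (5589/625)*g*b^2 + (98800671/1562500)*g*t + (28017/625)*g*t*b + (6/1)*g*t*b^2 + (22428/625)*g*t^2 + (12/1)*g*t^2*b + (5/1)*g*t^3 + (98800671/1562500)*g^2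 + (28017/625)*g^2*b + (6/1)*g^2*b^2 + (33642/625)*g^2*t + (18/1)*g^2*t*b + (12/1)*g^2*t^2 + (22428/625)*g^3 + (12/1)*g^3*b + (12/1)*g^3*t + (6/1)*g^4 + (57915816441/1562500000)*x + (119221149/3125000)*x*b + (5589/625)*x*b^2 + (92715921/1250000)*x*t + (61623/1250)*x*t*b + (6/1)*x*t*b^2 + (11589/250)*x*t^2 + (15/1)*x*t^2*b + (6/1)*x*t^3 + (92715921/625000)*x*g + (61623/625)*x*g*b + (12/1)*x*g*b^2 + (33267/250)*x*g*t + (42/1)*x*g*t*b + (30/1)*x*g*t^2 + (33267/250)*x*g^2 + (42/1)*x*g^2*b + (45/1)*x*g^2*t + (30/1)*x*g^3 + (474849219/6250000)*x^2 + (54123/1250)*x^2*b + (3/1)*x^2*b^2 + (185013/2500)*x^2*t + (21/1)*x^2*t*b + (18/1)*x^2*t^2 + (185013/1250)*x^2*g + (42/1)*x^2*g*b + (51/1)*x^2*g*t + (51/1)*x^2*g^2 + (27404/625)*x^3 + (8/1)*x^3*b + (16/1)*x^3*t + (32/1)*x^3*g + (3/1)*x^4 := by positivity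
  have hE : Dp1p1deg5 x (x + g + 1863/2500) (x + g + t + 1863/2500) b
      = -(69381286583/19531250000000) - ((9728654191/3906250000)*b + (1037307/3125000)*b^2 + (17768791829/976562500)*t + (63779421/3125000)*t*b + (5589/1250)*t*b^2 + (40746057/1562500)*t^2 + (11214/625)*t^2*b + (3/1)*t^2*b^2 + (2863/500)*t^3 + (2/1)*t^3*b + (1/1)*t^4 + (17768791829/488281250)*g + (63779421/1562500)*g*b + (5589/625)*g*b^2 + (98800671/1562500)*g*t + (28017/625)*g*t*b + (6/1)*g*t*b^2 + (22428/625)*g*t^2 + (12/1)*g*t^2*b + (5/1)*g*t^3 + (98800671/1562500)*g^2 + (28017/625)*g^2*b + (6/1)*g^2*b^2 + (33642/625)*g^2*t + (18/1)*g^2*t*b + (12/1)*g^2*t^2 + (22428/625)*g^3 + (12/1)*g^3*b + (12/1)*g^3*t + (6/1)*g^4 + (57915816441/1562500000)*x + (119221149/3125000)*x*b + (5589/625)*x*b^2 + (92715921/1250000)*x*t + (61623/1250)*x*t*b + (6/1)*x*t*b^2 + (11589/250)*x*t^2 + (15/1)*x*t^2*b + (6/1)*x*t^3 + (92715921/625000)*x*g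 + (61623/625)*x*g*b + (12/1)*x*g*b^2 + (33267/250)*x*g*t + (42/1)*x*g*t*b + (30/1)*x*g*t^2 + (33267/250)*x*g^2 + (42/1)*x*g^2*b + (45/1)*x*g^2*t + (30/1)*x*g^3 + (474849219/6250000)*x^2 + (54123/1250)*x^2*b + (3/1)*x^2*b^2 + (185013/2500)*x^2*t + (21/1)*x^2*t*b + (18/1)*x^2*t^2 + (185013/1250)*x^2*g + (42/1)*x^2*g*b + (51/1)*x^2*g*t + (51/1)*x^2*g^2 + (27404/625)*x^3 + (8/1)*x^3*b + (16/1)*x^3*t + (32/1)*x^3*g + (3/1)*x^4) := by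
    unfold Dp1p1deg5; ring
  rw [hE]
  linarith

theorem Dp1p1deg5_negative (a1 a2 a3 b : ℝ)
    (h0 : 0 ≤ a1) (h12 : a1 ≤ a2) (h23 : a2 ≤ a3) (h3 : a3 < 1) (hb : 0 ≤ b)
    (hgap : a2 - a1 ≥ 0.7452) :
    Dp1p1deg5 a1 a2 a3 b < 0 := by
  have hg : 0 ≤ a2 - a1 - 1863/2500 := by norm_num at hgap ⊢; linarith
  have ht : 0 ≤ a3 - a2 := by linarith
  have h := Dp1p1deg5_aux a1 (a2 - a1 - 1863/2500) (a3 - a2) b h0 hg ht hb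
  have e2 : a1 + (a2 - a1 - 1863/2500) + 1863/2500 = a2 := by ring
  have e3 : a1 + (a2 - a1 - 1863/2500) + (a3 - a2) + 1863/2500 = a3 := by ring
  rw [e2, e3] at h
  exact h
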